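/- Let Ω ⊆ ℝ² be open, ν ≠ 1 a real constant, V : Ω → ℝ a C² function, μ₁, μ₂ : Ω → ℝ C³ functions, and σ̄ : Ω → ℝ a function satisfying σ̄ − V/(1−ν) = −(1/2) ∂μ₁/∂x = −(1/2) ∂μ₂/∂y and ∂μ₁/∂y + ∂μ₂/∂x = 0 on Ω. Then Δ(σ̄ − V/(1−ν)) = 0 on Ω; equivalently, Δσ̄ + (div b)/(1−ν) = 0 where b = −∇V. -/

import Mathlib

/-- Partial derivative in the `x` direction of a function on `ℝ²`. -/
noncomputable def pdx (f : ℝ × ℝ → ℝ) : ℝ × ℝ → ℝ := fun p => fderiv ℝ f p (1, 0)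

/-- Partial derivative in the `y` direction of a function on `ℝ²`. -/
noncomputable def pdy (f : ℝ × ℝ → ℝ) : ℝ × ℝ → ℝ := fun p => fderiv ℝ f p (0, 1)

/-!
The multiplier equations `∂ₓμ₁ = ∂ᵧμ₂`, `∂ᵧμ₁ = -∂ₓμ₂` are the Cauchy–Riemann equations for
`μ₁ + iμ₂`, so `∂ₓμ₁` is harmonic: by symmetry of second derivatives,
`∂ₓ∂ₓ(∂ₓμ₁) = -∂ₓ∂ᵧ∂ᵧμ₁ = -∂ᵧ∂ᵧ(∂ₓμ₁)`. Since `σ̄ - V/(1-ν) = -½ ∂ₓμ₁`, it is harmonic too, and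
the second identity follows by linearity of the Laplacian.
-/

open Set Filter Topology

section DirectionalDerivative

variable {E : Type*} [NormedAddCommGroup E] [NormedSpace ℝ E] {f g : E → ℝ} {p : E}

theorem Filter.EventuallyEq.fderiv_apply (h : f =ᶠ[𝓝 p] g) (v : E) :
    (fun q => fderiv ℝ f q v) =ᶠ[𝓝 p] fun q => fderiv ℝ g q v :=
  h.fderiv.mono fun _ hq => DFunLike.congr_fun hq v

theorem ContDiffAt.fderiv_apply {m n : WithTop ℕ∞} (hf : ContDiffAt ℝ n f p) (hmn : m + 1 ≤ n)
    (v : E) : ContDiffAt ℝ m (fun q => fderiv ℝ f q v) p :=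
  (hf.fderiv_right hmn).clm_apply contDiffAt_const

theorem ContDiffAt.differentiableAt_fderiv_apply (hf : ContDiffAt ℝ 2 f p) (v : E) :
    DifferentiableAt ℝ (fun q => fderiv ℝ f q v) p :=
  (hf.fderiv_apply (m := 1) (by norm_num) v).differentiableAt one_ne_zero

theorem fderiv_fderiv_apply_comm (hf : ContDiffAt ℝ 2 f p) (v w : E) :
    fderiv ℝ (fun q => fderiv ℝ f q v) p w = fderiv ℝ (fun q => fderiv ℝ f q w) p v := by
  have hd : DifferentiableAt ℝ (fderiv ℝ f) p :=
    (hf.fderiv_right (m := 1) (by norm_num)).differentiableAt one_ne_zero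
  rw [fderiv_clm_apply hd (differentiableAt_const v), fderiv_clm_apply hd (differentiableAt_const w)]
  simpa using hf.isSymmSndFDerivAt (by simp) w v

theorem fderiv_apply_const_mul (c : ℝ) (v : E) :
    fderiv ℝ (fun q => c * f q) p v = c * fderiv ℝ f p v := by
  rw [show (fun q => c * f q) = c • f from rfl, fderiv_const_smul_field]
  rfl

theorem fderiv_fderiv_apply_const_mul (c : ℝ) (v w : E) :
    fderiv ℝ (fun q => fderiv ℝ (fun r => c * f r) q v) p w
      = c * fderiv ℝ (fun q => fderiv ℝ f q v) p w := by
  simp only [fderiv_apply_const_mul]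

theorem fderiv_fderiv_apply_add (hf : ContDiffAt ℝ 2 f p) (hg : ContDiffAt ℝ 2 g p) (v w : E) :
    fderiv ℝ (fun q => fderiv ℝ (fun r => f r + g r) q v) p w
      = fderiv ℝ (fun q => fderiv ℝ f q v) p w + fderiv ℝ (fun q => fderiv ℝ g q v) p w := by
  have hsum : (fun q => fderiv ℝ (fun r => f r + g r) q v)
      =ᶠ[𝓝 p] fun q => fderiv ℝ f q v + fderiv ℝ g q v := by
    filter_upwards [hf.eventually (by simp), hg.eventually (by simp)] with q hfq hgq
    rw [fderiv_fun_add (hfq.differentiableAt two_ne_zero) (hgq.differentiableAt two_ne_zero)]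
    rfl
  rw [hsum.fderiv_eq, fderiv_fun_add (hf.differentiableAt_fderiv_apply v)
    (hg.differentiableAt_fderiv_apply v)]
  rfl

end DirectionalDerivative

section PartialDerivative

variable {f g : ℝ × ℝ → ℝ} {p : ℝ × ℝ}

theorem Filter.EventuallyEq.pdx (h : f =ᶠ[𝓝 p] g) : pdx f =ᶠ[𝓝 p] pdx g :=
  h.fderiv_apply _

theorem Filter.EventuallyEq.pdy (h : f =ᶠ[𝓝 p] g) : pdy f =ᶠ[𝓝 p] pdy g :=
  h.fderiv_apply _

theorem pdx_neg : pdx (fun q => -f q) p = -pdx f p := by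
  simp only [pdx, fderiv_fun_neg, neg_apply]

theorem pdy_neg : pdy (fun q => -f q) p = -pdy f p := by
  simp only [pdy, fderiv_fun_neg, neg_apply]

theorem pdx_pdy_comm (hf : ContDiffAt ℝ 2 f p) : pdx (pdy f) p = pdy (pdx f) p :=
  fderiv_fderiv_apply_comm hf _ _

end PartialDerivative

noncomputable def planarLaplacian (f : ℝ × ℝ → ℝ) : ℝ × ℝ → ℝ :=
  fun p => pdx (pdx f) p + pdy (pdy f) p

section PlanarLaplacian

variable {f g : ℝ × ℝ → ℝ} {p : ℝ × ℝ}

theorem Filter.EventuallyEq.planarLaplacian_eq (h : f =ᶠ[𝓝 p] g) :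
    planarLaplacian f p = planarLaplacian g p := by
  rw [planarLaplacian, planarLaplacian, h.pdx.pdx.eq_of_nhds, h.pdy.pdy.eq_of_nhds]

theorem planarLaplacian_const_mul (c : ℝ) :
    planarLaplacian (fun q => c * f q) p = c * planarLaplacian f p := by
  unfold planarLaplacian pdx pdy
  rw [fderiv_fderiv_apply_const_mul, fderiv_fderiv_apply_const_mul, mul_add]

theorem planarLaplacian_add (hf : ContDiffAt ℝ 2 f p) (hg : ContDiffAt ℝ 2 g p) :
    planarLaplacian (fun q => f q + g q) p = planarLaplacian f p + planarLaplacian g p := by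
  unfold planarLaplacian pdx pdy
  rw [fderiv_fderiv_apply_add hf hg, fderiv_fderiv_apply_add hf hg]
  ring

theorem planarLaplacian_pdx_eq_zero_of_cauchyRiemann {s : Set (ℝ × ℝ)} {μ₁ μ₂ : ℝ × ℝ → ℝ}
    (hs : IsOpen s) (hμ₁ : ContDiffOn ℝ 3 μ₁ s) (hμ₂ : ContDiffOn ℝ 2 μ₂ s)
    (hdiag : EqOn (pdx μ₁) (pdy μ₂) s) (hoff : EqOn (pdx μ₂) (fun q => -pdy μ₁ q) s) :
    EqOn (planarLaplacian (pdx μ₁)) 0 s := by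
  intro p hp
  have hxx : EqOn (pdx (pdx μ₁)) (fun q => -pdy (pdy μ₁) q) s := by
    intro q hq
    calc pdx (pdx μ₁) q = pdx (pdy μ₂) q :=
          (hdiag.eventuallyEq_of_mem (hs.mem_nhds hq)).pdx.eq_of_nhds
      _ = pdy (pdx μ₂) q := pdx_pdy_comm (hμ₂.contDiffAt (hs.mem_nhds hq))
      _ = -pdy (pdy μ₁) q := by
          rw [(hoff.eventuallyEq_of_mem (hs.mem_nhds hq)).pdy.eq_of_nhds, pdy_neg]
  have hxy : EqOn (pdx (pdy μ₁)) (pdy (pdx μ₁)) s := fun q hq =>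
    pdx_pdy_comm ((hμ₁.contDiffAt (hs.mem_nhds hq)).of_le (by norm_num))
  have hμ₁y : ContDiffAt ℝ 2 (pdy μ₁) p :=
    (hμ₁.contDiffAt (hs.mem_nhds hp)).fderiv_apply (by norm_num) _
  have hxxx : pdx (pdx (pdx μ₁)) p = -pdy (pdy (pdx μ₁)) p := by
    rw [(hxx.eventuallyEq_of_mem (hs.mem_nhds hp)).pdx.eq_of_nhds, pdx_neg, pdx_pdy_comm hμ₁y,
      (hxy.eventuallyEq_of_mem (hs.mem_nhds hp)).pdy.eq_of_nhds]
  rw [planarLaplacian, hxxx, Pi.zero_apply, neg_add_cancel]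

end PlanarLaplacian

theorem stmt_16_general (Ω : Set (ℝ × ℝ)) (hΩ : IsOpen Ω) (ν : ℝ)
    (V : ℝ × ℝ → ℝ) (hV : ContDiffOn ℝ 2 V Ω)
    (μ₁ μ₂ : ℝ × ℝ → ℝ) (hμ₁ : ContDiffOn ℝ 3 μ₁ Ω) (hμ₂ : ContDiffOn ℝ 3 μ₂ Ω)
    (σbar : ℝ × ℝ → ℝ)
    (h1 : ∀ p ∈ Ω, σbar p - V p / (1 - ν) = -(1 / 2) * pdx μ₁ p)
    (h2 : ∀ p ∈ Ω, σbar p - V p / (1 - ν) = -(1 / 2) * pdy μ₂ p)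
    (h3 : ∀ p ∈ Ω, pdy μ₁ p + pdx μ₂ p = 0) :
    (∀ p ∈ Ω,
      pdx (pdx fun q => σbar q - V q / (1 - ν)) p +
        pdy (pdy fun q => σbar q - V q / (1 - ν)) p = 0) ∧
    (∀ p ∈ Ω,
      pdx (pdx σbar) p + pdy (pdy σbar) p -
        (pdx (pdx V) p + pdy (pdy V) p) / (1 - ν) = 0) := by
  set F : ℝ × ℝ → ℝ := fun q => σbar q - V q / (1 - ν)
  have hF : ∀ p ∈ Ω, F =ᶠ[𝓝 p] fun q => -(1 / 2) * pdx μ₁ q := fun p hp =>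
    eventually_of_mem (hΩ.mem_nhds hp) h1
  have hharm : EqOn (planarLaplacian (pdx μ₁)) 0 Ω :=
    planarLaplacian_pdx_eq_zero_of_cauchyRiemann hΩ hμ₁ (hμ₂.of_le (by norm_num))
      (fun q hq => by linarith [h1 q hq, h2 q hq]) (fun q hq => by linarith [h3 q hq])
  have hFharm : ∀ p ∈ Ω, planarLaplacian F p = 0 := fun p hp => by
    rw [(hF p hp).planarLaplacian_eq, planarLaplacian_const_mul, hharm hp, Pi.zero_apply, mul_zero]
  refine ⟨hFharm, fun p hp => ?_⟩
  have hFp : ContDiffAt ℝ 2 F p := (((hμ₁.contDiffAt (hΩ.mem_nhds hp)).fderiv_apply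
    (by norm_num) _).const_smul (-(1 / 2) : ℝ)).congr_of_eventuallyEq (hF p hp)
  have hσ : σbar = fun q => F q + (1 - ν)⁻¹ * V q := by
    funext q; simp only [F]; ring
  have hVp : ContDiffAt ℝ 2 (fun q => (1 - ν)⁻¹ * V q) p :=
    contDiffAt_const.mul (hV.contDiffAt (hΩ.mem_nhds hp))
  change planarLaplacian σbar p - planarLaplacian V p / (1 - ν) = 0
  rw [hσ, planarLaplacian_add hFp hVp, planarLaplacian_const_mul, hFharm p hp]
  ring

/-- Euler–Lagrange conclusion (Eq. traceComp2b) of the body-force extension of the planar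
trace principle: eliminating the Lagrange multiplier `μ` from
`σ̄ − V/(1−ν) = −(1/2)μ₁,x = −(1/2)μ₂,y`, `μ₁,y + μ₂,x = 0` shows that `σ̄ − V/(1−ν)`
is harmonic; equivalently `Δσ̄ + div b/(1−ν) = 0` with `b = −∇V`. -/
theorem stmt_16 (Ω : Set (ℝ × ℝ)) (hΩ : IsOpen Ω) (ν : ℝ) (hν : ν ≠ 1)
    (V : ℝ × ℝ → ℝ) (hV : ContDiffOn ℝ 2 V Ω)
    (μ₁ μ₂ : ℝ × ℝ → ℝ) (hμ₁ : ContDiffOn ℝ 3 μ₁ Ω) (hμ₂ : ContDiffOn ℝ 3 μ₂ Ω)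
    (σbar : ℝ × ℝ → ℝ)
    (h1 : ∀ p ∈ Ω, σbar p - V p / (1 - ν) = -(1 / 2) * pdx μ₁ p)
    (h2 : ∀ p ∈ Ω, σbar p - V p / (1 - ν) = -(1 / 2) * pdy μ₂ p)
    (h3 : ∀ p ∈ Ω, pdy μ₁ p + pdx μ₂ p = 0) :
    (∀ p ∈ Ω,
      pdx (pdx fun q => σbar q - V q / (1 - ν)) p +
        pdy (pdy fun q => σbar q - V q / (1 - ν)) p = 0) ∧
    (∀ p ∈ Ω,
      pdx (pdx σbar) p + pdy (pdy σbar) p -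
        (pdx (pdx V) p + pdy (pdy V) p) / (1 - ν) = 0) :=
  stmt_16_general Ω hΩ ν V hV μ₁ μ₂ hμ₁ hμ₂ σbar h1 h2 h3
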